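/- arXiv:1510.03106 — 4 statements merged into one kernel-verified Lean document; each statement's English description precedes it below -/
import Mathlib

section
/- Let D, E, F be Young diagrams with |F| > (r_1(D) − 1)(c_1(E) − 1) and F ≥ (D)_r ∪ (E)_c. Then F ≥ D or F ≥ E. -/
/-!
If `F` misses a cell of `D`, then, since `F` contains every row of `D` but the first, it misses a
cell of the first row, so `r₁(F) < r₁(D)`; symmetrically, missing a cell of `E` forces
`c₁(F) < c₁(E)`. But `F` lies inside its `c₁(F) × r₁(F)` bounding rectangle, so both failing
would give `|F| ≤ (r₁(D) - 1)(c₁(E) - 1)`.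
-/

/-- `Dr` is obtained from `D` by shortening the first row to `max (r₂ D) 1`. -/
def IsShortRow (D Dr : YoungDiagram) : Prop :=
  Dr.rowLen 0 = max (D.rowLen 1) 1 ∧ ∀ i : ℕ, 0 < i → Dr.rowLen i = D.rowLen i

/-- `Ec` is obtained from `E` by shortening the first column to `max (c₂ E) 1`. -/
def IsShortCol (E Ec : YoungDiagram) : Prop :=
  Ec.colLen 0 = max (E.colLen 1) 1 ∧ ∀ i : ℕ, 0 < i → Ec.colLen i = E.colLen i

namespace YoungDiagram

theorem le_iff_forall_rowLen_le {μ ν : YoungDiagram} :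
    μ ≤ ν ↔ ∀ i, μ.rowLen i ≤ ν.rowLen i := by
  refine ⟨fun h i => ?_, fun h ⟨i, j⟩ hx => ?_⟩
  · by_contra! hlt
    exact lt_irrefl _ (mem_iff_lt_rowLen.1 (h (mem_iff_lt_rowLen.2 hlt)))
  · exact mem_iff_lt_rowLen.2 ((mem_iff_lt_rowLen.1 hx).trans_le (h i))

theorem card_le_colLen_mul_rowLen (μ : YoungDiagram) : μ.card ≤ μ.colLen 0 * μ.rowLen 0 := by
  have hsub : μ.cells ⊆ Finset.range (μ.colLen 0) ×ˢ Finset.range (μ.rowLen 0) := by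
    intro ⟨i, j⟩ hx
    rw [mem_cells] at hx
    simp only [Finset.mem_product, Finset.mem_range]
    exact ⟨(mem_iff_lt_colLen.1 hx).trans_le (μ.colLen_anti 0 j j.zero_le),
      (mem_iff_lt_rowLen.1 hx).trans_le (μ.rowLen_anti 0 i i.zero_le)⟩
  simpa using Finset.card_le_card hsub

end YoungDiagram

open YoungDiagram

theorem IsShortRow.le_iff {D Dr F : YoungDiagram} (hDr : IsShortRow D Dr) (hle : Dr ≤ F) :
    D ≤ F ↔ D.rowLen 0 ≤ F.rowLen 0 := by
  rw [le_iff_forall_rowLen_le]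
  refine ⟨fun h => h 0, fun h0 i => ?_⟩
  rcases Nat.eq_zero_or_pos i with rfl | hi
  · exact h0
  · rw [← hDr.2 i hi]
    exact le_iff_forall_rowLen_le.1 hle i

theorem isShortRow_transpose_iff {E Ec : YoungDiagram} :
    IsShortRow E.transpose Ec.transpose ↔ IsShortCol E Ec := by
  simp only [IsShortRow, IsShortCol, rowLen_transpose]

theorem IsShortCol.le_iff {E Ec F : YoungDiagram} (hEc : IsShortCol E Ec) (hle : Ec ≤ F) :
    E ≤ F ↔ E.colLen 0 ≤ F.colLen 0 := by
  rw [← transpose_le_iff,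
    (isShortRow_transpose_iff.2 hEc).le_iff (YoungDiagram.transpose_mono hle),
    rowLen_transpose, rowLen_transpose]

theorem youngDiagram_ge_of_card_gt_general (D E F Dr Ec : YoungDiagram)
    (hDr : IsShortRow D Dr) (hEc : IsShortCol E Ec)
    (hcard : (D.rowLen 0 - 1) * (E.colLen 0 - 1) < F.card)
    (hle : Dr ⊔ Ec ≤ F) :
    D ≤ F ∨ E ≤ F := by
  obtain ⟨hDrF, hEcF⟩ := sup_le_iff.1 hle
  rw [hDr.le_iff hDrF, hEc.le_iff hEcF]
  by_contra! ⟨hrow, hcol⟩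
  have hcard_le : F.card ≤ (D.rowLen 0 - 1) * (E.colLen 0 - 1) := calc
    F.card ≤ F.colLen 0 * F.rowLen 0 := F.card_le_colLen_mul_rowLen
    _ ≤ (E.colLen 0 - 1) * (D.rowLen 0 - 1) := Nat.mul_le_mul (by omega) (by omega)
    _ = (D.rowLen 0 - 1) * (E.colLen 0 - 1) := mul_comm _ _
  exact hcard_le.not_gt hcard

/-- If `|F| > (r₁(D) - 1)(c₁(E) - 1)` and `F ≥ (D)_r ⊔ (E)_c`, then `F ≥ D` or `F ≥ E`. -/
theorem youngDiagram_ge_of_card_gt (D E F Dr Ec : YoungDiagram)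
    (hD : D ≠ ⊥) (hE : E ≠ ⊥)
    (hDr : IsShortRow D Dr) (hEc : IsShortCol E Ec)
    (hcard : (D.rowLen 0 - 1) * (E.colLen 0 - 1) < F.card)
    (hle : Dr ⊔ Ec ≤ F) :
    D ≤ F ∨ E ≤ F :=
  youngDiagram_ge_of_card_gt_general D E F Dr Ec hDr hEc hcard hle
end

section
/- For any finite set S of Young diagrams, let Ŝ = {(D)_r ∪ (E)_c : D, E ∈ S}. Then the upward closure ucl(Ŝ) is a closed set of diagrams: for every diagram F, F ∈ ucl(Ŝ) if and only if every diagram G > F belongs to ucl(Ŝ). -/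
/-- The upward closure of a set of Young diagrams. -/
def ucl (S : Set YoungDiagram) : Set YoungDiagram := {E | ∃ D ∈ S, D ≤ E}

/-- `Ŝ = {(D)_r ⊔ (E)_c : D, E ∈ S}`. -/
def shat (S : Finset YoungDiagram) : Set YoungDiagram :=
  {F | ∃ D ∈ S, ∃ E ∈ S, ∃ Dr Ec : YoungDiagram,
    IsShortRow D Dr ∧ IsShortCol E Ec ∧ F = Dr ⊔ Ec}

/-!
One direction is upward closure. Conversely, the diagrams obtained from `F` by adding one cell
at the end of its first row, resp. of its first column, are `> F`, hence lie above some
`Dr ⊔ Ec` and `Dr' ⊔ Ec'` in `Ŝ`. Then already `Dr ⊔ Ec' ≤ F`: the first row of `Dr` has length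
`max (r₂ Dr) 1 ≤ r₁ F`, so `Dr` never needs the added cell, and dually (by transposition) for
`Ec'`.
-/

namespace YoungDiagram

theorem zero_zero_mem {F : YoungDiagram} (hF : F ≠ ⊥) : (0, 0) ∈ F := by
  obtain ⟨c, hc⟩ : F.cells.Nonempty := by
    rw [Finset.nonempty_iff_ne_empty]
    exact fun h => hF (YoungDiagram.ext h)
  exact F.up_left_mem (Nat.zero_le _) (Nat.zero_le _) hc

def extendFirstRow (F : YoungDiagram) : YoungDiagram where
  cells := insert (0, F.rowLen 0) F.cells
  isLowerSet := by
    rintro ⟨i, j⟩ ⟨i', j'⟩ ⟨hi : i' ≤ i, hj : j' ≤ j⟩ h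
    simp only [Finset.coe_insert, Set.mem_insert_iff, Prod.mk.injEq, Finset.mem_coe,
      mem_cells, mem_iff_lt_rowLen] at h ⊢
    rcases h with ⟨rfl, rfl⟩ | h
    · obtain rfl : i' = 0 := Nat.le_zero.mp hi
      omega
    · exact Or.inr (lt_of_lt_of_le (hj.trans_lt h) (F.rowLen_anti _ _ hi))

theorem mem_extendFirstRow {F : YoungDiagram} {c : ℕ × ℕ} :
    c ∈ F.extendFirstRow ↔ c = (0, F.rowLen 0) ∨ c ∈ F := by
  rw [← mem_cells]
  exact Finset.mem_insert

theorem lt_extendFirstRow (F : YoungDiagram) : F < F.extendFirstRow := by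
  refine lt_of_le_of_ne (fun c hc => mem_extendFirstRow.mpr (Or.inr hc)) fun h => ?_
  have : (0, F.rowLen 0) ∈ F.extendFirstRow := mem_extendFirstRow.mpr (Or.inl rfl)
  rw [← h, mem_iff_lt_rowLen] at this
  exact lt_irrefl _ this

def extendFirstCol (F : YoungDiagram) : YoungDiagram :=
  F.transpose.extendFirstRow.transpose

theorem lt_extendFirstCol (F : YoungDiagram) : F < F.extendFirstCol := by
  simpa [extendFirstCol] using transposeOrderIso.lt_iff_lt.mpr F.transpose.lt_extendFirstRow

end YoungDiagram

open YoungDiagram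

theorem IsShortRow.le_of_le_extendFirstRow {D Dr F : YoungDiagram} (hr : IsShortRow D Dr)
    (hF : (0, 0) ∈ F) (hle : Dr ≤ F.extendFirstRow) : Dr ≤ F := by
  have lower : ∀ {i j}, 0 < i → (i, j) ∈ Dr → (i, j) ∈ F := fun hi h =>
    (mem_extendFirstRow.mp (hle h)).resolve_left fun h0 => hi.ne' (congrArg Prod.fst h0)
  rintro ⟨i, j⟩ h
  rcases Nat.eq_zero_or_pos i with rfl | hi
  · rw [mem_iff_lt_rowLen, hr.1, ← hr.2 1 one_pos, lt_max_iff, ← mem_iff_lt_rowLen,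
      Nat.lt_one_iff] at h
    rcases h with h | rfl
    · exact F.up_left_mem (Nat.zero_le 1) le_rfl (lower one_pos h)
    · exact hF
  · exact lower hi h

theorem IsShortCol.transpose {E Ec : YoungDiagram} (hc : IsShortCol E Ec) :
    IsShortRow E.transpose Ec.transpose := by
  simp only [IsShortRow, rowLen_transpose]
  exact hc

theorem IsShortCol.le_of_le_extendFirstCol {E Ec F : YoungDiagram} (hc : IsShortCol E Ec)
    (hF : (0, 0) ∈ F) (hle : Ec ≤ F.extendFirstCol) : Ec ≤ F := by
  rw [← transpose_le_iff]
  refine hc.transpose.le_of_le_extendFirstRow (by simpa using hF) ?_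
  simpa [extendFirstCol] using YoungDiagram.transpose_mono hle

theorem ucl_shat_closed_general (S : Finset YoungDiagram) :
    ∀ F : YoungDiagram, F ≠ ⊥ →
      (F ∈ ucl (shat S) ↔ ∀ G : YoungDiagram, F < G → G ∈ ucl (shat S)) := by
  intro F hF
  refine ⟨fun ⟨H, hH, hHF⟩ G hFG => ⟨H, hH, hHF.trans hFG.le⟩, fun h => ?_⟩
  obtain ⟨_, ⟨D, hD, _, _, Dr, _, hr, _, rfl⟩, hrow⟩ := h _ F.lt_extendFirstRow
  obtain ⟨_, ⟨_, _, E, hE, _, Ec, _, hc, rfl⟩, hcol⟩ := h _ F.lt_extendFirstCol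
  exact ⟨Dr ⊔ Ec, ⟨D, hD, E, hE, Dr, Ec, hr, hc, rfl⟩,
    sup_le (hr.le_of_le_extendFirstRow (zero_zero_mem hF) (le_sup_left.trans hrow))
      (hc.le_of_le_extendFirstCol (zero_zero_mem hF) (le_sup_right.trans hcol))⟩

/-- For a finite set `S` of (nonempty) Young diagrams, `ucl(Ŝ)` is closed: a nonempty
diagram `F` belongs to it iff every diagram `G > F` belongs to it. -/
theorem ucl_shat_closed (S : Finset YoungDiagram) (hS : ∀ D ∈ S, D ≠ ⊥) :
    ∀ F : YoungDiagram, F ≠ ⊥ →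
      (F ∈ ucl (shat S) ↔ ∀ G : YoungDiagram, F < G → G ∈ ucl (shat S)) :=
  ucl_shat_closed_general S
end

section
/- For any finite set S of Young diagrams, the upward closure ucl(Ŝ) of Ŝ = {(D)_r ∪ (E)_c : D, E ∈ S} is the smallest closed set containing S: it contains S, it is closed, and it is contained in every closed set of diagrams containing S. -/
/-- A set `U` of Young diagrams is closed if a nonempty diagram belongs to `U`
iff all of its strict extensions do. -/
def ClosedSet (U : Set YoungDiagram) : Prop :=
  ∀ F : YoungDiagram, F ≠ ⊥ → (F ∈ U ↔ ∀ G : YoungDiagram, F < G → G ∈ U)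

/-!
Upward closure makes `ucl Ŝ` closed in one direction. For the other, if `F` plus a cell at the
end of its first row lies above `(D)_r ⊔ (E)_c ∈ Ŝ` and `F` plus a cell at the end of its first
column lies above `(D')_r ⊔ (E')_c ∈ Ŝ`, then already `(D)_r ⊔ (E')_c ≤ F`: adding a cell
to the first row changes no other row, and the first row of `(D)_r` is as short as its rows
below allow.

Conversely, a closed set `U ⊇ S` contains every extension of every `D ∈ S`. If
`(D)_r ⊔ (E)_c ≤ G`, every extension `H` of `G` with enough cells has first row at least that of
`D` or first column at least that of `E`, so `H` contains `D` or `E` and lies in `U`; closedness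
then carries membership down from these large diagrams to `G`.
-/

namespace YoungDiagram

variable {μ ν : YoungDiagram}

theorem le_iff_rowLen_le : μ ≤ ν ↔ ∀ i, μ.rowLen i ≤ ν.rowLen i := by
  refine ⟨fun h i => ?_, fun h => ?_⟩
  · by_contra! hlt
    have : (i, ν.rowLen i) ∈ μ := mem_iff_lt_rowLen.mpr hlt
    exact (lt_irrefl _) (mem_iff_lt_rowLen.mp (h this))
  · rintro ⟨i, j⟩ hc
    exact mem_iff_lt_rowLen.mpr ((mem_iff_lt_rowLen.mp hc).trans_le (h i))

theorem ne_bot_iff_rowLen_pos : μ ≠ ⊥ ↔ 0 < μ.rowLen 0 := by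
  rw [← mem_iff_lt_rowLen, ne_eq, ← SetLike.coe_set_eq, coe_bot, ← ne_eq,
    ← Set.nonempty_iff_ne_empty]
  exact ⟨fun ⟨_, hc⟩ => μ.up_left_mem (Nat.zero_le _) (Nat.zero_le _) hc,
    fun h => ⟨_, h⟩⟩

theorem rowLen_colLen_zero (μ : YoungDiagram) : μ.rowLen (μ.colLen 0) = 0 := by
  by_contra! h
  exact (lt_irrefl _) (mem_iff_lt_colLen.mp (mem_iff_lt_rowLen.mpr (Nat.pos_of_ne_zero h)))

theorem card_cells_le_colLen_mul_rowLen (μ : YoungDiagram) :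
    μ.cells.card ≤ μ.colLen 0 * μ.rowLen 0 := by
  rw [← Finset.card_range (μ.colLen 0), ← Finset.card_range (μ.rowLen 0),
    ← Finset.card_product]
  refine Finset.card_le_card fun ⟨i, j⟩ hc => ?_
  rw [mem_cells] at hc
  simp only [Finset.mem_product, Finset.mem_range]
  exact ⟨(mem_iff_lt_colLen.mp hc).trans_le (μ.colLen_anti 0 j (Nat.zero_le _)),
    (mem_iff_lt_rowLen.mp hc).trans_le (μ.rowLen_anti 0 i (Nat.zero_le _))⟩

theorem lt_rowLen_or_lt_colLen_of_mul_lt_card {a b : ℕ} (h : a * b < μ.cells.card) :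
    a < μ.rowLen 0 ∨ b < μ.colLen 0 := by
  by_contra! hab
  have := μ.card_cells_le_colLen_mul_rowLen.trans (Nat.mul_le_mul hab.2 hab.1)
  rw [Nat.mul_comm] at this
  omega


theorem transpose_eq_bot_iff : μ.transpose = ⊥ ↔ μ = ⊥ := by
  rw [← transposeOrderIso.map_bot]
  exact transpose_eq_iff

/-- The first `N` rows of the diagram whose `i`-th row has length `f i`. -/
def ofRowLen (f : ℕ → ℕ) (hf : Antitone f) (N : ℕ) : YoungDiagram where
  cells := (Finset.range N ×ˢ Finset.range (f 0)).filter fun c => c.2 < f c.1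
  isLowerSet := by
    rintro ⟨a, b⟩ ⟨i, j⟩ ⟨hia, hjb⟩ hc
    simp only [Finset.coe_filter, Finset.mem_product, Finset.mem_range, Set.mem_ofPred_eq]
      at hc ⊢
    exact ⟨⟨hc.1.1.trans_le' hia, hc.1.2.trans_le' hjb⟩,
      (hjb.trans_lt hc.2).trans_le (hf hia)⟩

theorem mem_ofRowLen {f : ℕ → ℕ} {hf : Antitone f} {N : ℕ} (hN : f N = 0) {i j : ℕ} :
    (i, j) ∈ ofRowLen f hf N ↔ j < f i := by
  rw [← mem_cells]
  simp only [ofRowLen, Finset.mem_filter, Finset.mem_product, Finset.mem_range,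
    and_iff_right_iff_imp]
  intro hj
  refine ⟨lt_of_not_ge fun hNi => ?_, hj.trans_le (hf (Nat.zero_le i))⟩
  have := hf hNi
  omega

theorem rowLen_ofRowLen {f : ℕ → ℕ} {hf : Antitone f} {N : ℕ} (hN : f N = 0) (i : ℕ) :
    (ofRowLen f hf N).rowLen i = f i :=
  eq_of_forall_lt_iff fun _ => by rw [← mem_iff_lt_rowLen, mem_ofRowLen hN]

def setRowLenZero (μ : YoungDiagram) (m : ℕ) (hm : μ.rowLen 1 ≤ m) : YoungDiagram :=
  ofRowLen (fun i => if i = 0 then m else μ.rowLen i)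
    (antitone_nat_of_succ_le fun i => by
      rcases i with _ | i
      · simpa using hm
      · simpa using μ.rowLen_anti _ _ (Nat.le_succ _))
    (μ.colLen 0 + 1)

theorem rowLen_setRowLenZero {m : ℕ} (hm : μ.rowLen 1 ≤ m) (i : ℕ) :
    (μ.setRowLenZero m hm).rowLen i = if i = 0 then m else μ.rowLen i := by
  refine rowLen_ofRowLen ?_ i
  simpa using (μ.rowLen_anti _ _ (Nat.le_succ _)).trans_eq μ.rowLen_colLen_zero

theorem rowLen_setRowLenZero_zero {m : ℕ} (hm : μ.rowLen 1 ≤ m) :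
    (μ.setRowLenZero m hm).rowLen 0 = m := by
  simp [rowLen_setRowLenZero]

theorem rowLen_setRowLenZero_of_pos {m i : ℕ} (hm : μ.rowLen 1 ≤ m) (hi : 0 < i) :
    (μ.setRowLenZero m hm).rowLen i = μ.rowLen i := by
  simp [rowLen_setRowLenZero, hi.ne']

/-- `μ` with one cell added at the end of its first row. -/
def addRow (μ : YoungDiagram) : YoungDiagram :=
  μ.setRowLenZero (μ.rowLen 0 + 1) ((μ.rowLen_anti 0 1 zero_le_one).trans (Nat.le_succ _))

theorem rowLen_addRow_of_pos (μ : YoungDiagram) {i : ℕ} (hi : 0 < i) :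
    μ.addRow.rowLen i = μ.rowLen i :=
  rowLen_setRowLenZero_of_pos _ hi

theorem lt_addRow (μ : YoungDiagram) : μ < μ.addRow := by
  refine lt_of_le_of_ne (le_iff_rowLen_le.mpr fun i => ?_) fun h => ?_
  · rcases Nat.eq_zero_or_pos i with rfl | hi
    · rw [addRow, rowLen_setRowLenZero_zero]; exact Nat.le_succ _
    · rw [addRow, rowLen_setRowLenZero_of_pos _ hi]
  · have := congrArg (rowLen · 0) h
    simp only [addRow, rowLen_setRowLenZero_zero] at this
    omega

/-- `μ` with one cell added at the end of its first column. -/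
def addCol (μ : YoungDiagram) : YoungDiagram := μ.transpose.addRow.transpose

theorem lt_addCol (μ : YoungDiagram) : μ < μ.addCol := by
  simpa [addCol, transpose_transpose] using
    transposeOrderIso.strictMono (lt_addRow μ.transpose)

end YoungDiagram

open YoungDiagram

section

variable {D Dr E Ec F G : YoungDiagram}

theorem isShortCol_iff_isShortRow_transpose :
    IsShortCol E Ec ↔ IsShortRow E.transpose Ec.transpose := by
  simp only [IsShortCol, IsShortRow, rowLen_transpose]

theorem exists_isShortRow (D : YoungDiagram) : ∃ Dr, IsShortRow D Dr :=
  ⟨D.setRowLenZero _ (le_max_left _ 1), rowLen_setRowLenZero_zero _,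
    fun _ hi => rowLen_setRowLenZero_of_pos _ hi⟩

theorem exists_isShortCol (E : YoungDiagram) : ∃ Ec, IsShortCol E Ec := by
  obtain ⟨Dr, h⟩ := exists_isShortRow E.transpose
  exact ⟨Dr.transpose, by rwa [isShortCol_iff_isShortRow_transpose, transpose_transpose]⟩

namespace IsShortRow

theorem ne_bot (h : IsShortRow D Dr) : Dr ≠ ⊥ :=
  ne_bot_iff_rowLen_pos.mpr (h.1 ▸ lt_of_lt_of_le one_pos (le_max_right _ _))

theorem le_iff_s12 (h : IsShortRow D Dr) (hF : F ≠ ⊥) :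
    Dr ≤ F ↔ ∀ i, 0 < i → D.rowLen i ≤ F.rowLen i := by
  refine ⟨fun hle i hi => h.2 i hi ▸ le_iff_rowLen_le.mp hle i, fun hrows => ?_⟩
  refine le_iff_rowLen_le.mpr fun i => ?_
  rcases Nat.eq_zero_or_pos i with rfl | hi
  · rw [h.1]
    exact max_le ((hrows 1 one_pos).trans (F.rowLen_anti 0 1 zero_le_one))
      (ne_bot_iff_rowLen_pos.mp hF)
  · exact h.2 i hi ▸ hrows i hi

theorem le_self (h : IsShortRow D Dr) (hD : D ≠ ⊥) : Dr ≤ D :=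
  (h.le_iff_s12 hD).mpr fun _ _ => le_rfl

theorem le_of_rowLen_zero_le (h : IsShortRow D Dr) (hG : Dr ≤ G)
    (h0 : D.rowLen 0 ≤ G.rowLen 0) : D ≤ G := by
  refine le_iff_rowLen_le.mpr fun i => ?_
  rcases Nat.eq_zero_or_pos i with rfl | hi
  · exact h0
  · exact h.2 i hi ▸ le_iff_rowLen_le.mp hG i

theorem le_of_le_addRow (h : IsShortRow D Dr) (hF : F ≠ ⊥) (hle : Dr ≤ F.addRow) :
    Dr ≤ F :=
  (h.le_iff_s12 hF).mpr fun i hi => by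
    rw [← h.2 i hi, ← F.rowLen_addRow_of_pos hi]
    exact le_iff_rowLen_le.mp hle i

end IsShortRow

namespace IsShortCol

theorem le_self (h : IsShortCol E Ec) (hE : E ≠ ⊥) : Ec ≤ E := by
  rw [isShortCol_iff_isShortRow_transpose] at h
  rw [← transpose_le_iff]
  exact h.le_self (mt transpose_eq_bot_iff.mp hE)

theorem le_of_colLen_zero_le (h : IsShortCol E Ec) (hG : Ec ≤ G)
    (h0 : E.colLen 0 ≤ G.colLen 0) : E ≤ G := by
  rw [isShortCol_iff_isShortRow_transpose] at h
  rw [← transpose_le_iff] at hG ⊢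
  exact h.le_of_rowLen_zero_le hG (by simpa only [rowLen_transpose] using h0)

theorem le_of_le_addCol (h : IsShortCol E Ec) (hF : F ≠ ⊥) (hle : Ec ≤ F.addCol) :
    Ec ≤ F := by
  rw [isShortCol_iff_isShortRow_transpose] at h
  rw [← transpose_le_iff, addCol, transpose_transpose] at hle
  rw [← transpose_le_iff]
  exact h.le_of_le_addRow (mt transpose_eq_bot_iff.mp hF) hle

end IsShortCol

namespace ClosedSet

variable {U : Set YoungDiagram}

theorem mem_of_le (hU : ClosedSet U) (hF : F ∈ U) (hF0 : F ≠ ⊥) (hFG : F ≤ G) : G ∈ U :=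
  hFG.eq_or_lt.elim (· ▸ hF) ((hU F hF0).mp hF G)

theorem mem_of_forall_card_le (hU : ClosedSet U) (N : ℕ) (hG : G ≠ ⊥)
    (h : ∀ H, G ≤ H → N ≤ H.cells.card → H ∈ U) : G ∈ U := by
  suffices ∀ k G, G ≠ ⊥ → (∀ H, G ≤ H → N ≤ H.cells.card → H ∈ U) →
      N ≤ k + G.cells.card → G ∈ U from this N G hG h (by omega)
  intro k
  induction k with
  | zero => exact fun G _ h hN => h G le_rfl (by omega)
  | succ k ih =>
    refine fun G hG h hN => (hU G hG).mpr fun H hGH => ?_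
    have hcard := Finset.card_lt_card (cells_ssubset_iff.mpr hGH)
    exact ih H (ne_bot_of_le_ne_bot hG hGH.le) (fun K hHK => h K (hGH.le.trans hHK)) (by omega)

end ClosedSet

end

theorem closedSet_ucl_shat (S : Finset YoungDiagram) : ClosedSet (ucl (shat S)) := by
  intro F hF
  refine ⟨fun ⟨W, hW, hWF⟩ G hFG => ⟨W, hW, hWF.trans hFG.le⟩, fun h => ?_⟩
  obtain ⟨_, ⟨D, hD, _, _, Dr, _, hDr, _, rfl⟩, hRow⟩ := h _ F.lt_addRow
  obtain ⟨_, ⟨_, _, E, hE, _, Ec, _, hEc, rfl⟩, hCol⟩ := h _ F.lt_addCol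
  exact ⟨Dr ⊔ Ec, ⟨D, hD, E, hE, Dr, Ec, hDr, hEc, rfl⟩,
    sup_le (hDr.le_of_le_addRow hF (le_sup_left.trans hRow))
      (hEc.le_of_le_addCol hF (le_sup_right.trans hCol))⟩

theorem ucl_shat_subset_of_closedSet {S : Finset YoungDiagram} (hS : ∀ D ∈ S, D ≠ ⊥)
    {U : Set YoungDiagram} (hU : ClosedSet U) (hSU : ∀ D ∈ S, D ∈ U) :
    ucl (shat S) ⊆ U := by
  rintro G ⟨_, ⟨D, hD, E, hE, Dr, Ec, hDr, hEc, rfl⟩, hG⟩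
  have hDrG : Dr ≤ G := le_sup_left.trans hG
  have hEcG : Ec ≤ G := le_sup_right.trans hG
  refine hU.mem_of_forall_card_le (D.rowLen 0 * E.colLen 0 + 1)
    (ne_bot_of_le_ne_bot hDr.ne_bot hDrG) fun H hGH hH => ?_
  rcases lt_rowLen_or_lt_colLen_of_mul_lt_card hH with hRow | hCol
  · exact hU.mem_of_le (hSU D hD) (hS D hD)
      (hDr.le_of_rowLen_zero_le (hDrG.trans hGH) hRow.le)
  · exact hU.mem_of_le (hSU E hE) (hS E hE)
      (hEc.le_of_colLen_zero_le (hEcG.trans hGH) hCol.le)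

/-- `ucl(Ŝ)` is the smallest closed set containing the finite set `S`:
it contains `S`, it is closed, and it is contained in every closed set containing `S`. -/
theorem ucl_shat_smallest_closed (S : Finset YoungDiagram) (hS : ∀ D ∈ S, D ≠ ⊥) :
    (∀ D ∈ S, D ∈ ucl (shat S)) ∧ ClosedSet (ucl (shat S)) ∧
      ∀ U : Set YoungDiagram, ClosedSet U → (∀ D ∈ S, D ∈ U) →
        ucl (shat S) ⊆ U := by
  refine ⟨fun D hD => ?_, closedSet_ucl_shat S,
    fun U hU hSU => ucl_shat_subset_of_closedSet hS hU hSU⟩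
  obtain ⟨Dr, hDr⟩ := exists_isShortRow D
  obtain ⟨Dc, hDc⟩ := exists_isShortCol D
  exact ⟨Dr ⊔ Dc, ⟨D, hD, D, hD, Dr, Dc, hDr, hDc, rfl⟩,
    sup_le (hDr.le_self (hS D hD)) (hDc.le_self (hS D hD))⟩
end

section
/- For any finite set S of Young diagrams, ucl(Ŝ) = S̄ ∪ ucl(S), where S̄ = {F ∈ ucl(Ŝ) : |F| ≤ ‖S‖} and ‖S‖ = max{(r_1(D)−1)(c_1(E)−1) : D, E ∈ S}. In particular, every element of ucl(Ŝ) either has at most ‖S‖ cells or lies above some element of S. -/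
/-- `‖S‖ = max {(r₁(D) - 1)(c₁(E) - 1) : D, E ∈ S}`. -/
def normS (S : Finset YoungDiagram) : ℕ :=
  (S ×ˢ S).sup fun p => (p.1.rowLen 0 - 1) * (p.2.colLen 0 - 1)

open YoungDiagram

lemma rowLen_le_of_le {μ ν : YoungDiagram} (h : μ ≤ ν) (i : ℕ) :
    μ.rowLen i ≤ ν.rowLen i := by
  rcases Nat.eq_zero_or_pos (μ.rowLen i) with h0 | h0
  · omega
  · have hm : (i, μ.rowLen i - 1) ∈ μ := mem_iff_lt_rowLen.mpr (by omega)
    have := mem_iff_lt_rowLen.mp (h hm)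
    omega

lemma rowLen_pos_of_ne_bot {D : YoungDiagram} (hD : D ≠ ⊥) : 0 < D.rowLen 0 := by
  by_contra h
  apply hD
  apply le_bot_iff.mp
  rw [← cells_subset_iff]
  intro c hc
  exfalso
  have h00 : (0, 0) ∈ D := D.up_left_mem (Nat.zero_le _) (Nat.zero_le _)
    (YoungDiagram.mem_cells _ |>.mp hc)
  have := mem_iff_lt_rowLen.mp h00
  omega

/-- the diagram obtained by shortening the first row of `D`. -/
def shortRow (D : YoungDiagram) : YoungDiagram :=
  ⟨D.cells.filter (fun c => 0 < c.1 ∨ c.2 < max (D.rowLen 1) 1), by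
    intro a b hba ha
    simp only [Finset.coe_filter, Set.mem_setOf_eq, YoungDiagram.mem_cells] at ha ⊢
    obtain ⟨haD, hcond⟩ := ha
    obtain ⟨i2, j2⟩ := a
    obtain ⟨i1, j1⟩ := b
    obtain ⟨hi, hj⟩ := hba
    simp only at hi hj hcond ⊢
    refine ⟨D.up_left_mem hi hj haD, ?_⟩
    rcases hcond with h1 | h1
    · rcases Nat.eq_zero_or_pos i1 with hz | hz
      · right
        have := mem_iff_lt_rowLen.mp haD
        have hr : D.rowLen i2 ≤ D.rowLen 1 := D.rowLen_anti 1 i2 h1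
        omega
      · left; exact hz
    · right; omega⟩

lemma mem_shortRow {D : YoungDiagram} {i j : ℕ} :
    (i, j) ∈ shortRow D ↔ (i, j) ∈ D ∧ (0 < i ∨ j < max (D.rowLen 1) 1) := by
  change (i, j) ∈ Finset.filter _ _ ↔ _
  simp [Finset.mem_filter, YoungDiagram.mem_cells]

lemma shortRow_le (D : YoungDiagram) : shortRow D ≤ D := by
  rw [← cells_subset_iff]
  exact Finset.filter_subset _ _

lemma isShortRow_shortRow {D : YoungDiagram} (hD : D ≠ ⊥) : IsShortRow D (shortRow D) := by
  have h0 : 0 < D.rowLen 0 := rowLen_pos_of_ne_bot hD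
  have h10 : D.rowLen 1 ≤ D.rowLen 0 := D.rowLen_anti 0 1 (by omega)
  constructor
  · apply le_antisymm
    · have : (0, max (D.rowLen 1) 1) ∉ shortRow D := by
        rw [mem_shortRow]; push_neg
        intro _; omega
      have := mt mem_iff_lt_rowLen.mpr this
      omega
    · have : (0, max (D.rowLen 1) 1 - 1) ∈ shortRow D := by
        rw [mem_shortRow]
        refine ⟨mem_iff_lt_rowLen.mpr (by omega), Or.inr (by omega)⟩
      have := mem_iff_lt_rowLen.mp this
      omega
  · intro i hi
    apply le_antisymm
    · exact rowLen_le_of_le (shortRow_le D) i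
    · rcases Nat.eq_zero_or_pos (D.rowLen i) with hz | hz
      · omega
      · have : (i, D.rowLen i - 1) ∈ shortRow D := by
          rw [mem_shortRow]
          exact ⟨mem_iff_lt_rowLen.mpr (by omega), Or.inl hi⟩
        have := mem_iff_lt_rowLen.mp this
        omega

/-- shortening the first column. -/
def shortCol (E : YoungDiagram) : YoungDiagram := (shortRow E.transpose).transpose

lemma transpose_bot : (⊥ : YoungDiagram).transpose = ⊥ := by
  apply le_bot_iff.mp
  rw [← cells_subset_iff]
  intro c hc
  exfalso
  exact notMem_bot _ (mem_transpose.mp (YoungDiagram.mem_cells _ |>.mp hc))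

lemma shortCol_le (E : YoungDiagram) : shortCol E ≤ E := by
  have := YoungDiagram.transpose_mono (shortRow_le E.transpose)
  rwa [transpose_transpose] at this

lemma isShortCol_shortCol {E : YoungDiagram} (hE : E ≠ ⊥) : IsShortCol E (shortCol E) := by
  have hT : E.transpose ≠ ⊥ := by
    intro h
    apply hE
    rw [← transpose_transpose E, h, transpose_bot]
  obtain ⟨h1, h2⟩ := isShortRow_shortRow hT
  constructor
  · rw [shortCol, colLen_transpose, h1, rowLen_transpose]
  · intro i hi
    rw [shortCol, colLen_transpose, h2 i hi, rowLen_transpose]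

lemma le_of_isShortRow {D Dr F : YoungDiagram} (h : IsShortRow D Dr) (hDF : Dr ≤ F)
    (hr : D.rowLen 0 ≤ F.rowLen 0) : D ≤ F := by
  rw [← cells_subset_iff]
  intro c hc
  obtain ⟨i, j⟩ := c
  rw [YoungDiagram.mem_cells, mem_iff_lt_rowLen] at hc ⊢
  rcases Nat.eq_zero_or_pos i with hz | hz
  · subst hz; omega
  · have := rowLen_le_of_le hDF i
    rw [h.2 i hz] at this
    omega

lemma isShortRow_transpose {E Ec : YoungDiagram} (h : IsShortCol E Ec) :
    IsShortRow E.transpose Ec.transpose := by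
  obtain ⟨h1, h2⟩ := h
  constructor
  · rw [rowLen_transpose, h1, rowLen_transpose]
  · intro i hi
    rw [rowLen_transpose, h2 i hi, rowLen_transpose]

lemma le_of_isShortCol {E Ec F : YoungDiagram} (h : IsShortCol E Ec) (hEF : Ec ≤ F)
    (hc : E.colLen 0 ≤ F.colLen 0) : E ≤ F := by
  rw [← transpose_le_iff]
  exact le_of_isShortRow (isShortRow_transpose h) (YoungDiagram.transpose_mono hEF)
    (by rwa [rowLen_transpose, rowLen_transpose])

lemma card_le_mul (F : YoungDiagram) : F.card ≤ F.colLen 0 * F.rowLen 0 := by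
  have hsub : F.cells ⊆ Finset.range (F.colLen 0) ×ˢ Finset.range (F.rowLen 0) := by
    intro c hc
    obtain ⟨i, j⟩ := c
    rw [YoungDiagram.mem_cells] at hc
    have h1 : (i, 0) ∈ F := F.up_left_mem le_rfl (Nat.zero_le _) hc
    have h2 : (0, j) ∈ F := F.up_left_mem (Nat.zero_le _) le_rfl hc
    simp only [Finset.mem_product, Finset.mem_range]
    exact ⟨mem_iff_lt_colLen.mp h1, mem_iff_lt_rowLen.mp h2⟩
  calc F.card ≤ _ := Finset.card_le_card hsub
    _ = F.colLen 0 * F.rowLen 0 := by simp [Finset.card_product]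

lemma mem_ucl {T : Set YoungDiagram} {F : YoungDiagram} : F ∈ ucl T ↔ ∃ D ∈ T, D ≤ F := Iff.rfl

lemma mem_shat {S : Finset YoungDiagram} {F : YoungDiagram} :
    F ∈ shat S ↔ ∃ D ∈ S, ∃ E ∈ S, ∃ Dr Ec : YoungDiagram,
      IsShortRow D Dr ∧ IsShortCol E Ec ∧ F = Dr ⊔ Ec := Iff.rfl

set_option maxHeartbeats 1000000 in
/-- `ucl(Ŝ) = S̄ ∪ ucl(S)`, where `S̄` consists of the members of `ucl(Ŝ)` with at most
`‖S‖` cells: every element of `ucl(Ŝ)` has at most `‖S‖` cells or lies above some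
element of `S`. -/
theorem ucl_shat_eq_sbar_union_ucl (S : Finset YoungDiagram) (hS : ∀ D ∈ S, D ≠ ⊥) :
    ucl (shat S) =
      {F : YoungDiagram | F ∈ ucl (shat S) ∧ F.card ≤ normS S} ∪ ucl ↑S := by
  ext F
  simp only [Set.mem_union, Set.mem_setOf_eq]
  constructor
  · intro hF
    have hF' := hF
    rw [mem_ucl] at hF'
    obtain ⟨G, hG, hGF⟩ := hF'
    rw [mem_shat] at hG
    obtain ⟨D, hD, E, hE, Dr, Ec, hDr, hEc, rfl⟩ := hG
    have hDrF : Dr ≤ F := le_trans le_sup_left hGF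
    have hEcF : Ec ≤ F := le_trans le_sup_right hGF
    by_cases hr : D.rowLen 0 ≤ F.rowLen 0
    · exact Or.inr ⟨D, Finset.mem_coe.mpr hD, le_of_isShortRow hDr hDrF hr⟩
    by_cases hc : E.colLen 0 ≤ F.colLen 0
    · exact Or.inr ⟨E, Finset.mem_coe.mpr hE, le_of_isShortCol hEc hEcF hc⟩
    left
    refine ⟨hF, ?_⟩
    have hnorm : (D.rowLen 0 - 1) * (E.colLen 0 - 1) ≤ normS S := by
      unfold normS
      exact Finset.le_sup (f := fun p : YoungDiagram × YoungDiagram =>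
        (p.1.rowLen 0 - 1) * (p.2.colLen 0 - 1)) (Finset.mk_mem_product hD hE)
    have h1 := card_le_mul F
    have h2 : F.colLen 0 * F.rowLen 0 ≤ (D.rowLen 0 - 1) * (E.colLen 0 - 1) := by
      rw [mul_comm]
      exact Nat.mul_le_mul (by omega) (by omega)
    omega
  · rintro (⟨h, _⟩ | ⟨D, hD, hDF⟩)
    · exact h
    · have hD' : D ∈ S := Finset.mem_coe.mp hD
      have hne := hS D hD'
      rw [mem_ucl]
      refine ⟨shortRow D ⊔ shortCol D, mem_shat.mpr
        ⟨D, hD', D, hD', shortRow D, shortCol D,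
          isShortRow_shortRow hne, isShortCol_shortCol hne, rfl⟩, ?_⟩
      exact le_trans (sup_le (shortRow_le D) (shortCol_le D)) hDF
end
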